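/- Let T(b) = k₀·b + t₀ for b < b* and T(b) = k₁·b + t₁ for b ≥ b*, with 0 < k₀ < k₁, t₀, t₁ > 0, continuity at b*. For any fixed total work S ∈ (0, B] and any way to split S into m ≥ 1 sequential batches of positive sizes, the total time Σ T(bᵢ) is minimized uniquely at m = 1. -/

import Mathlib

/-! Continuity at `bstar` and `k0 ≤ k1` make `T` the maximum of its two affine pieces, so each
piece is a global minorant of `T`. If the piece active at `S` is `b ↦ k * b + t`, then splitting `S`
into `m ≥ 2` batches costs at least `k * S + m * t`, which exceeds `T S = k * S + t` because the
intercept `t` is positive. -/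

/-- Piecewise-linear batch iteration-time model. -/
noncomputable def T (k0 t0 k1 t1 bstar : ℝ) (b : ℝ) : ℝ :=
  if b < bstar then k0 * b + t0 else k1 * b + t1

lemma Multiset.sum_map_affine (k t : ℝ) (s : Multiset ℝ) :
    (s.map fun b => k * b + t).sum = k * s.sum + Multiset.card s * t := by
  rw [Multiset.sum_map_add, Multiset.sum_map_mul_left, Multiset.map_id', Multiset.map_const',
    Multiset.sum_replicate, nsmul_eq_mul]

lemma Multiset.lt_sum_map_of_affine_minorant {f : ℝ → ℝ} {k t : ℝ} {s : Multiset ℝ}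
    (ht : 0 < t) (hcard : 2 ≤ Multiset.card s) (hle : ∀ b ∈ s, k * b + t ≤ f b)
    (heq : f s.sum = k * s.sum + t) :
    f s.sum < (s.map f).sum := by
  have hm : (2 : ℝ) ≤ Multiset.card s := by exact_mod_cast hcard
  calc f s.sum = k * s.sum + t := heq
    _ < k * s.sum + Multiset.card s * t := by nlinarith
    _ = (s.map fun b => k * b + t).sum := (Multiset.sum_map_affine k t s).symm
    _ ≤ (s.map f).sum := Multiset.sum_map_le_sum_map _ _ hle

lemma T_eq_max {k0 t0 k1 t1 bstar : ℝ} (hk : k0 ≤ k1)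
    (hcont : k0 * bstar + t0 = k1 * bstar + t1) (b : ℝ) :
    T k0 t0 k1 t1 bstar b = max (k0 * b + t0) (k1 * b + t1) := by
  unfold T
  split_ifs with hb
  · exact (max_eq_left (by nlinarith)).symm
  · exact (max_eq_right (by nlinarith)).symm

theorem single_batch_uniquely_optimal_general (k0 t0 k1 t1 bstar S : ℝ)
    (hk01 : k0 < k1) (ht0 : 0 < t0) (ht1 : 0 < t1)
    (hcont : k0 * bstar + t0 = k1 * bstar + t1)
    (s : Multiset ℝ) (hsum : s.sum = S)
    (hcard : 2 ≤ Multiset.card s) :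
    T k0 t0 k1 t1 bstar S < (s.map (T k0 t0 k1 t1 bstar)).sum := by
  subst hsum
  have hT := T_eq_max hk01.le hcont
  rcases max_choice (k0 * s.sum + t0) (k1 * s.sum + t1) with hS | hS
  · exact Multiset.lt_sum_map_of_affine_minorant ht0 hcard
      (fun b _ => (hT b).symm ▸ le_max_left _ _) ((hT _).trans hS)
  · exact Multiset.lt_sum_map_of_affine_minorant ht1 hcard
      (fun b _ => (hT b).symm ▸ le_max_right _ _) ((hT _).trans hS)

/-- Among all ways to split a workload `S ∈ (0, B]` into sequential batches of
positive sizes, the single batch `{S}` uniquely minimizes total time: any split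
into `m ≥ 2` batches takes strictly more time. -/
theorem single_batch_uniquely_optimal (k0 t0 k1 t1 bstar B S : ℝ)
    (hk0 : 0 < k0) (hk01 : k0 < k1) (ht0 : 0 < t0) (ht1 : 0 < t1)
    (hcont : k0 * bstar + t0 = k1 * bstar + t1)
    (hS : 0 < S) (hSB : S ≤ B)
    (s : Multiset ℝ) (hpos : ∀ b ∈ s, 0 < b) (hsum : s.sum = S)
    (hcard : 2 ≤ Multiset.card s) :
    T k0 t0 k1 t1 bstar S < (s.map (T k0 t0 k1 t1 bstar)).sum :=
  single_batch_uniquely_optimal_general k0 t0 k1 t1 bstar S hk01 ht0 ht1 hcont s hsum hcard
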